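/- For every nonnegative integer m and real x, the m-th Euler polynomial satisfies E_m(x) = sum_{k=0}^m binomial(m,k) * ω_k(-1/2) * x^{m-k}, where ω_k is the geometric polynomial ω_k(t) = sum_{j=0}^k S(k,j) * j! * t^j. -/

import Mathlib

/-- Stirling numbers of the second kind, via the standard recurrence. -/
def stirling2 : ℕ → ℕ → ℕ
  | 0, 0 => 1
  | 0, _ + 1 => 0
  | _ + 1, 0 => 0
  | m + 1, n + 1 => (n + 1) * stirling2 m (n + 1) + stirling2 m n

/-- The Euler polynomial `E_m(x)`, defined via the generating function
`2 e^{xt}/(e^t + 1) = ∑ E_m(x) t^m / m!`. -/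
noncomputable def eulerPoly (m : ℕ) (x : ℝ) : ℝ :=
  (m.factorial : ℝ) *
    PowerSeries.coeff (R := ℝ) m
      (2 * PowerSeries.rescale x (PowerSeries.exp ℝ) * (PowerSeries.exp ℝ + 1)⁻¹)

/-!
With `u = (1 - eᵗ) / 2` one has `2 / (eᵗ + 1) = 1 / (1 - u) = ∑ⱼ uʲ`, a sum that is finite in each
degree because `u` has no constant term. Differentiating `(eᵗ - 1)ᵏ` reproduces the recurrence of
`S(n, k)`, so `(eᵗ - 1)ᵏ / k!` is the exponential generating function of `S(·, k)`; hence `ω_k(-1/2)`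
are the exponential generating coefficients of `2 / (eᵗ + 1)`. Multiplying by `e^{xt}` is a binomial
convolution of exponential generating functions.
-/

open PowerSeries Finset Nat

theorem stirling2_eq_stirlingSecond : stirling2 = stirlingSecond := by
  funext n k
  induction n generalizing k with
  | zero => cases k <;> rfl
  | succ n ih =>
    cases k with
    | zero => rfl
    | succ k => rw [stirling2, stirlingSecond_succ_succ, ih, ih]

def geometricPoly {R : Type*} [CommSemiring R] (k : ℕ) (t : R) : R :=
  ∑ j ∈ range (k + 1), (stirlingSecond k j : R) * (j ! : R) * t ^ j

namespace PowerSeries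

theorem factorial_mul_coeff_mul {R : Type*} [CommSemiring R] (f g : R⟦X⟧) (n : ℕ) :
    (n ! : R) * coeff n (f * g) = ∑ k ∈ range (n + 1),
      (n.choose k : R) * ((k ! : R) * coeff k f) * (((n - k)! : R) * coeff (n - k) g) := by
  rw [coeff_mul, Finset.Nat.sum_antidiagonal_eq_sum_range_succ_mk, mul_sum]
  refine sum_congr rfl fun k hk => ?_
  rw [← choose_mul_factorial_mul_factorial (mem_range_succ_iff.mp hk)]
  push_cast
  ring

theorem coeff_eq_sum_coeff_pow_of_mul_one_sub_eq_one {R : Type*} [CommRing R] {f u : R⟦X⟧}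
    (hu : constantCoeff u = 0) (hf : f * (1 - u) = 1) (n : ℕ) :
    coeff n f = ∑ j ∈ range (n + 1), coeff n (u ^ j) := by
  have hsplit : f = ∑ j ∈ range (n + 1), u ^ j + f * u ^ (n + 1) := by
    linear_combination (∑ j ∈ range (n + 1), u ^ j) * hf - f * geom_sum_mul_neg u (n + 1)
  have hdvd : X ^ (n + 1) ∣ f * u ^ (n + 1) :=
    (pow_dvd_pow_of_dvd (X_dvd_iff.mpr hu) _).mul_left f
  rw [hsplit, map_add, X_pow_dvd_iff.mp hdvd n n.lt_succ_self, add_zero, map_sum]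

section Exp

variable {A : Type*} [CommRing A] [Algebra ℚ A]

theorem factorial_mul_coeff_rescale_exp (a : A) (n : ℕ) :
    (n ! : A) * coeff n (rescale a (exp A)) = a ^ n := by
  rw [coeff_rescale, coeff_exp, mul_left_comm, ← map_natCast (algebraMap ℚ A), ← map_mul]
  simp [n.factorial_ne_zero]

theorem derivative_exp_sub_one_pow_succ (k : ℕ) :
    d⁄dX A ((exp A - 1) ^ (k + 1)) = (k + 1 : A) • ((exp A - 1) ^ (k + 1) + (exp A - 1) ^ k) := by
  rw [derivative_pow, map_sub, derivative_exp, derivative_one, smul_eq_C_mul]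
  simp only [map_add, map_natCast, map_one, Nat.cast_add, Nat.cast_one, add_tsub_cancel_right]
  ring

theorem factorial_mul_coeff_exp_sub_one_pow (n k : ℕ) :
    (n ! : A) * coeff n ((exp A - 1) ^ k) = (stirlingSecond n k * k ! : ℕ) := by
  induction n generalizing k with
  | zero => cases k <;> simp
  | succ n ih =>
    cases k with
    | zero => simp
    | succ k =>
      calc ((n + 1)! : A) * coeff (n + 1) ((exp A - 1) ^ (k + 1))
          = (n ! : A) * coeff n (d⁄dX A ((exp A - 1) ^ (k + 1))) := by
            rw [coeff_derivative, factorial_succ]; push_cast; ring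
        _ = (k + 1) * ((n ! : A) * coeff n ((exp A - 1) ^ (k + 1)) +
              (n ! : A) * coeff n ((exp A - 1) ^ k)) := by
            rw [derivative_exp_sub_one_pow_succ, map_smul, map_add, smul_eq_mul]; ring
        _ = (stirlingSecond (n + 1) (k + 1) * (k + 1)! : ℕ) := by
            rw [ih, ih, stirlingSecond_succ_succ, factorial_succ]; push_cast; ring

theorem factorial_mul_coeff_eq_geometricPoly {f : A⟦X⟧} {t : A}
    (hf : f * (1 - C t * (exp A - 1)) = 1) (k : ℕ) :
    (k ! : A) * coeff k f = geometricPoly k t := by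
  rw [coeff_eq_sum_coeff_pow_of_mul_one_sub_eq_one (by simp) hf, mul_sum, geometricPoly]
  refine sum_congr rfl fun j _ => ?_
  rw [mul_pow, ← map_pow, coeff_C_mul, mul_left_comm, factorial_mul_coeff_exp_sub_one_pow]
  push_cast
  ring

end Exp

theorem factorial_mul_coeff_two_mul_inv_exp_add_one {K : Type*} [Field K] [CharZero K] (k : ℕ) :
    (k ! : K) * coeff k (2 * (exp K + 1)⁻¹) = geometricPoly k (-1 / 2) := by
  refine factorial_mul_coeff_eq_geometricPoly ?_ k
  have two_mul_half : (2 : K⟦X⟧) * C (1 / 2) = 1 := by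
    rw [← map_ofNat C 2, ← map_mul, mul_one_div_cancel two_ne_zero, map_one]
  have one_sub_eq : (1 : K⟦X⟧) - C (-1 / 2) * (exp K - 1) = C (1 / 2) * (exp K + 1) := by
    rw [neg_div, map_neg]
    linear_combination -two_mul_half
  rw [one_sub_eq, mul_mul_mul_comm, PowerSeries.inv_mul_cancel _ (by simp), mul_one, two_mul_half]

end PowerSeries

theorem eulerPoly_eq_geometric_poly_sum (m : ℕ) (x : ℝ) :
    eulerPoly m x
      = ∑ k ∈ Finset.range (m + 1), (m.choose k : ℝ) *
          (∑ j ∈ Finset.range (k + 1),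
            (stirling2 k j : ℝ) * (j.factorial : ℝ) * (-1 / 2) ^ j) * x ^ (m - k) := by
  rw [eulerPoly, mul_right_comm, factorial_mul_coeff_mul]
  refine sum_congr rfl fun k _ => ?_
  rw [factorial_mul_coeff_two_mul_inv_exp_add_one, factorial_mul_coeff_rescale_exp,
    geometricPoly, stirling2_eq_stirlingSecond]
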